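/- arXiv:0803.0640 — 3 statements merged into one kernel-verified Lean document; each statement's English description precedes it below -/
import Mathlib

section
/- If d(A,B) = 0, i.e. Λ_R(A,B)·Λ_R(B,A) = 1, then the length functions l_A and l_B are proportional: there is a positive constant c with l_B(w) = c · l_A(w) for all nontrivial w. -/
/-- The right-hand stretching factor `Λ_R(A,B) = sup_{w ≠ 1} l_B(w)/l_A(w)`. -/
noncomputable def stretchR {G : Type*} [Group G] (lA lB : G → ℝ) : ℝ :=
  ⨆ w : {w : G // w ≠ 1}, lB w / lA w

theorem stmt_5 {G : Type*} [Group G] [Nontrivial G] (lA lB : G → ℝ)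
    (hA : ∀ w : G, w ≠ 1 → 0 < lA w) (hB : ∀ w : G, w ≠ 1 → 0 < lB w)
    (hAB : BddAbove (Set.range fun w : {w : G // w ≠ 1} => lB w / lA w))
    (hBA : BddAbove (Set.range fun w : {w : G // w ≠ 1} => lA w / lB w))
    (hattAB : ∃ w : {w : G // w ≠ 1}, lB w / lA w = stretchR lA lB)
    (hattBA : ∃ w : {w : G // w ≠ 1}, lA w / lB w = stretchR lB lA)
    (h : stretchR lA lB * stretchR lB lA = 1) :
    ∃ c : ℝ, 0 < c ∧ ∀ w : G, w ≠ 1 → lB w = c * lA w := by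
  set Λ := stretchR lA lB with hΛ
  set μ := stretchR lB lA with hμ
  obtain ⟨w0, hw0⟩ := hattAB
  have hΛpos : 0 < Λ := by
    rw [← hw0]
    exact div_pos (hB w0 w0.2) (hA w0 w0.2)
  refine ⟨Λ, hΛpos, fun w hw => ?_⟩
  have hle : lB w / lA w ≤ Λ := le_ciSup hAB ⟨w, hw⟩
  have hle' : lA w / lB w ≤ μ := le_ciSup hBA ⟨w, hw⟩
  have hμeq : μ = 1 / Λ := by field_simp; linarith [h]
  have hge : Λ ≤ lB w / lA w := by
    rw [hμeq] at hle'
    have hBpos := hB w hw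
    have hApos := hA w hw
    rw [div_le_div_iff₀ hBpos hΛpos] at hle'
    rw [le_div_iff₀ hApos]
    nlinarith
  have : lB w / lA w = Λ := le_antisymm hle hge
  rw [← this, div_mul_cancel₀ _ (hA w hw).ne']
end

section
/- Sequences along a straight segment in a simplex of Outer Space maximize stretching at a fixed loop: Let A, B ∈ ℝ^k with positive coordinates and let A_t = (1-t)A + tB. Suppose ξ₀ ∈ ℝ^k (nonzero with nonnegative coordinates) maximizes ⟨B,ξ⟩/⟨A,ξ⟩ over a set S of such vectors ξ. Then for all 0 ≤ s < t ≤ 1, ξ₀ also maximizes ⟨A_t,ξ⟩/⟨A_s,ξ⟩ over S. -/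
lemma sum_pos_of_pos_of_nonneg {k : ℕ} (C ξ : Fin k → ℝ) (hC : ∀ i, 0 < C i)
    (hξ : ∀ i, 0 ≤ ξ i) (hne : ξ ≠ 0) : 0 < ∑ i, C i * ξ i := by
  obtain ⟨j, hj⟩ : ∃ j, ξ j ≠ 0 := by
    by_contra h
    push_neg at h
    exact hne (funext h)
  apply Finset.sum_pos' (fun i _ => mul_nonneg (hC i).le (hξ i))
  exact ⟨j, Finset.mem_univ j, mul_pos (hC j) (lt_of_le_of_ne (hξ j) (Ne.symm hj))⟩

theorem stmt_9 {k : ℕ} (hk : 1 ≤ k) (A B : Fin k → ℝ)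
    (hA : ∀ i, 0 < A i) (hB : ∀ i, 0 < B i)
    (S : Set (Fin k → ℝ))
    (hS : ∀ ξ ∈ S, ξ ≠ 0 ∧ ∀ i, 0 ≤ ξ i)
    (ξ₀ : Fin k → ℝ) (hξ₀ : ξ₀ ∈ S)
    (hmax : ∀ ξ ∈ S,
      (∑ i, B i * ξ i) / (∑ i, A i * ξ i) ≤ (∑ i, B i * ξ₀ i) / (∑ i, A i * ξ₀ i)) :
    ∀ s t : ℝ, 0 ≤ s → s < t → t ≤ 1 → ∀ ξ ∈ S,
      (∑ i, ((1 - t) * A i + t * B i) * ξ i) / (∑ i, ((1 - s) * A i + s * B i) * ξ i)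
        ≤ (∑ i, ((1 - t) * A i + t * B i) * ξ₀ i) /
            (∑ i, ((1 - s) * A i + s * B i) * ξ₀ i) := by
  intro s t hs hst ht1 ξ hξ
  obtain ⟨hne, hnn⟩ := hS ξ hξ
  obtain ⟨hne₀, hnn₀⟩ := hS ξ₀ hξ₀
  set a := ∑ i, A i * ξ i with ha
  set b := ∑ i, B i * ξ i with hb
  set a₀ := ∑ i, A i * ξ₀ i with ha₀
  set b₀ := ∑ i, B i * ξ₀ i with hb₀
  have hapos : 0 < a := sum_pos_of_pos_of_nonneg A ξ hA hnn hne
  have hbpos : 0 < b := sum_pos_of_pos_of_nonneg B ξ hB hnn hne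
  have ha₀pos : 0 < a₀ := sum_pos_of_pos_of_nonneg A ξ₀ hA hnn₀ hne₀
  have hb₀pos : 0 < b₀ := sum_pos_of_pos_of_nonneg B ξ₀ hB hnn₀ hne₀
  have hcross : a₀ * b ≤ a * b₀ := by
    have := hmax ξ hξ
    rw [div_le_div_iff₀ hapos ha₀pos] at this
    linarith
  have e1 : ∑ i, ((1 - t) * A i + t * B i) * ξ i = (1 - t) * a + t * b := by
    simp only [ha, hb, Finset.mul_sum, ← Finset.sum_add_distrib]
    exact Finset.sum_congr rfl (fun i _ => by ring)
  have e2 : ∑ i, ((1 - s) * A i + s * B i) * ξ i = (1 - s) * a + s * b := by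
    simp only [ha, hb, Finset.mul_sum, ← Finset.sum_add_distrib]
    exact Finset.sum_congr rfl (fun i _ => by ring)
  have e3 : ∑ i, ((1 - t) * A i + t * B i) * ξ₀ i = (1 - t) * a₀ + t * b₀ := by
    simp only [ha₀, hb₀, Finset.mul_sum, ← Finset.sum_add_distrib]
    exact Finset.sum_congr rfl (fun i _ => by ring)
  have e4 : ∑ i, ((1 - s) * A i + s * B i) * ξ₀ i = (1 - s) * a₀ + s * b₀ := by
    simp only [ha₀, hb₀, Finset.mul_sum, ← Finset.sum_add_distrib]
    exact Finset.sum_congr rfl (fun i _ => by ring)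
  rw [e1, e2, e3, e4]
  have hd1 : 0 < (1 - s) * a + s * b := by nlinarith
  have hd2 : 0 < (1 - s) * a₀ + s * b₀ := by nlinarith
  rw [div_le_div_iff₀ hd1 hd2]
  nlinarith [mul_nonneg (sub_nonneg.2 hst.le) (sub_nonneg.2 hcross)]
end

section
/- If a path γ has the 4 point property (for s ≤ x ≤ y ≤ t, d(γ(x),γ(y)) ≤ d(γ(s),γ(t))) and is a concatenation of n pieces each of which is a (λ,ε) quasi-geodesic, then γ is an (nλ, nε) quasi-geodesic. -/
theorem stmt_10 {X : Type*} [MetricSpace X] (γ : ℝ → X)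
    (n : ℕ) (hn : 1 ≤ n) (x : Fin (n + 1) → ℝ) (hmono : Monotone x)
    (lam eps : ℝ) (hlam : 1 ≤ lam) (heps : 0 ≤ eps)
    (hqg : ∀ i : Fin n, ∀ p q : ℝ,
      p ∈ Set.Icc (x i.castSucc) (x i.succ) → q ∈ Set.Icc (x i.castSucc) (x i.succ) →
      (1 / lam) * |p - q| - eps ≤ dist (γ p) (γ q) ∧
        dist (γ p) (γ q) ≤ lam * |p - q| + eps)
    (h4pt : ∀ s u y t : ℝ, x 0 ≤ s → s ≤ u → u ≤ y → y ≤ t → t ≤ x (Fin.last n) →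
      dist (γ u) (γ y) ≤ dist (γ s) (γ t)) :
    ∀ p q : ℝ, p ∈ Set.Icc (x 0) (x (Fin.last n)) → q ∈ Set.Icc (x 0) (x (Fin.last n)) →
      (1 / (n * lam)) * |p - q| - n * eps ≤ dist (γ p) (γ q) ∧
        dist (γ p) (γ q) ≤ n * lam * |p - q| + n * eps := by
  have hlam0 : (0:ℝ) < lam := lt_of_lt_of_le one_pos hlam
  have hn1 : (1:ℝ) ≤ (n:ℝ) := by exact_mod_cast hn
  have hnlam : (0:ℝ) < (n:ℝ) * lam := by positivity
  have key : ∀ p q : ℝ, p ≤ q → x 0 ≤ p → q ≤ x (Fin.last n) →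
      (1 / (n * lam)) * |p - q| - n * eps ≤ dist (γ p) (γ q) ∧
        dist (γ p) (γ q) ≤ n * lam * |p - q| + n * eps := by
    intro p q hpq hxp hqx
    set d := dist (γ p) (γ q) with hd
    have hd0 : 0 ≤ d := dist_nonneg
    set u : ℕ → ℝ := fun k =>
      max p (min q (x ⟨min k n, Nat.lt_succ_of_le (min_le_right _ _)⟩)) with hu
    have hu0 : u 0 = p := by
      have h0 : (⟨min 0 n, Nat.lt_succ_of_le (min_le_right _ _)⟩ : Fin (n+1)) = 0 := by
        ext; simp
      simp only [hu, h0]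
      rw [min_eq_right (le_trans hxp hpq), max_eq_left hxp]
    have hun : u n = q := by
      have h0 : (⟨min n n, Nat.lt_succ_of_le (min_le_right _ _)⟩ : Fin (n+1)) = Fin.last n := by
        ext; simp
      simp only [hu, h0]
      rw [min_eq_left hqx, max_eq_right hpq]
    have habs : |p - q| = q - p := by rw [abs_sub_comm]; exact abs_of_nonneg (by linarith)
    -- per-piece estimates
    have piece : ∀ k, k < n →
        (u (k+1) - u k ≤ lam * (d + eps)) ∧
        dist (γ (u k)) (γ (u (k+1))) ≤ lam * (u (k+1) - u k) + eps := by
      intro k hk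
      have hmk : min k n = k := min_eq_left (le_of_lt hk)
      have hmk1 : min (k+1) n = k+1 := min_eq_left hk
      set i : Fin n := ⟨k, hk⟩ with hi
      have e1 : (⟨min k n, Nat.lt_succ_of_le (min_le_right _ _)⟩ : Fin (n+1)) = i.castSucc := by
        ext; simp [hmk, hi]
      have e2 : (⟨min (k+1) n, Nat.lt_succ_of_le (min_le_right _ _)⟩ : Fin (n+1)) = i.succ := by
        ext; simp [hmk1, hi]
      have hua : u k = max p (min q (x i.castSucc)) := by simp only [hu, e1]
      have hub : u (k+1) = max p (min q (x i.succ)) := by simp only [hu, e2]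
      have hxii : x i.castSucc ≤ x i.succ := hmono (Fin.castSucc_le_succ i)
      have hab : u k ≤ u (k+1) := by
        rw [hua, hub]
        exact max_le_max le_rfl (min_le_min le_rfl hxii)
      by_cases he : u k = u (k+1)
      · rw [← he]
        simp only [sub_self, dist_self]
        constructor
        · positivity
        · linarith
      · have hlt : u k < u (k+1) := lt_of_le_of_ne hab he
        -- x i.castSucc ≤ q
        have hxq : x i.castSucc ≤ q := by
          by_contra hcon
          push_neg at hcon
          have h1 : u k = q := by
            rw [hua, min_eq_left (le_of_lt hcon), max_eq_right hpq]
          have h2 : u (k+1) = q := by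
            rw [hub, min_eq_left (le_trans (le_of_lt hcon) hxii), max_eq_right hpq]
          rw [h1, h2] at hlt; exact lt_irrefl _ hlt
        have hpx : p ≤ x i.succ := by
          by_contra hcon
          push_neg at hcon
          have h1 : u (k+1) = p := by
            rw [hub, min_eq_right (le_trans (le_of_lt hcon) hpq),
              max_eq_left (le_of_lt hcon)]
          have h2 : u k = p := by
            rw [hua, min_eq_right (le_trans (le_trans hxii (le_of_lt hcon)) hpq),
              max_eq_left (le_trans hxii (le_of_lt hcon))]
          rw [h1, h2] at hlt; exact lt_irrefl _ hlt
        have ha1 : x i.castSucc ≤ u k := by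
          rw [hua, min_eq_right hxq]; exact le_max_right _ _
        have hb2 : u (k+1) ≤ x i.succ := by
          rw [hub]; exact max_le hpx (min_le_right _ _)
        have hmema : u k ∈ Set.Icc (x i.castSucc) (x i.succ) :=
          ⟨ha1, le_trans hab hb2⟩
        have hmemb : u (k+1) ∈ Set.Icc (x i.castSucc) (x i.succ) :=
          ⟨le_trans ha1 hab, hb2⟩
        have hpa : p ≤ u k := by rw [hua]; exact le_max_left _ _
        have hbq : u (k+1) ≤ q := by rw [hub]; exact max_le hpq (min_le_left _ _)
        have h4 := h4pt p (u k) (u (k+1)) q hxp hpa hab hbq hqx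
        have hq1 := hqg i (u k) (u (k+1)) hmema hmemb
        have habs2 : |u k - u (k+1)| = u (k+1) - u k := by
          rw [abs_sub_comm]; exact abs_of_nonneg (by linarith)
        rw [habs2] at hq1
        constructor
        · have h5 : 1/lam * (u (k+1) - u k) ≤ d + eps := by linarith [hq1.1, h4]
          rw [one_div_mul_eq_div, div_le_iff₀ hlam0] at h5
          linarith
        · exact hq1.2
    have tel : ∑ k ∈ Finset.range n, (u (k+1) - u k) = q - p := by
      rw [Finset.sum_range_sub, hun, hu0]
    constructor
    · -- lower bound
      have hsum : q - p ≤ (n:ℝ) * (lam * (d + eps)) := by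
        calc q - p = ∑ k ∈ Finset.range n, (u (k+1) - u k) := tel.symm
          _ ≤ ∑ _k ∈ Finset.range n, lam * (d + eps) :=
              Finset.sum_le_sum (fun k hk => (piece k (Finset.mem_range.mp hk)).1)
          _ = (n:ℝ) * (lam * (d + eps)) := by
              rw [Finset.sum_const, Finset.card_range, nsmul_eq_mul]
      have h1 : 1 / ((n:ℝ) * lam) * (q - p) ≤ d + eps := by
        rw [one_div_mul_eq_div, div_le_iff₀ hnlam]
        nlinarith
      rw [habs]
      nlinarith
    · -- upper bound
      have hub : d ≤ lam * (q - p) + (n:ℝ) * eps := by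
        calc d = dist (γ (u 0)) (γ (u n)) := by rw [hu0, hun]
          _ ≤ ∑ k ∈ Finset.range n, dist (γ (u k)) (γ (u (k+1))) :=
              dist_le_range_sum_dist (fun k => γ (u k)) n
          _ ≤ ∑ k ∈ Finset.range n, (lam * (u (k+1) - u k) + eps) :=
              Finset.sum_le_sum (fun k hk => (piece k (Finset.mem_range.mp hk)).2)
          _ = lam * (q - p) + (n:ℝ) * eps := by
              rw [Finset.sum_add_distrib, ← Finset.mul_sum, tel, Finset.sum_const,
                Finset.card_range, nsmul_eq_mul]
      rw [habs]
      have hge : (0:ℝ) ≤ ((n:ℝ)-1)*lam*(q-p) :=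
        mul_nonneg (mul_nonneg (by linarith) (by linarith)) (by linarith)
      linarith [hub, hge]
  intro p q hp hq
  rcases le_total p q with h | h
  · exact key p q h hp.1 hq.2
  · have := key q p h hq.1 hp.2
    rw [dist_comm (γ q) (γ p), abs_sub_comm q p] at this
    exact this
end
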